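/- arXiv:2308.04871 — 3 statements merged into one kernel-verified Lean document; each statement's English description precedes it below -/
import Mathlib

section
/- In Penney's game with a fair coin, the pattern HH is beaten by the pattern TH: the probability that TH appears before HH in an infinite sequence of independent fair coin flips is 3/4. -/
open MeasureTheory ProbabilityTheory
open scoped ENNReal

/-! Let flip `k ≥ 1` be the first head after flip 0; it exists almost surely. Unless `k = 1` and
flip 0 is a head, flips `k - 1, k` form a TH, and no HH occurs before it because flips
`1, …, k - 1` are tails. So, up to a null event, TH precedes HH exactly when the first two
flips are not HH, which has probability `1 - 1/4`. -/

theorem exists_TH_before_HH_iff (x : ℕ → Bool) :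
    (∃ n, (x n = false ∧ x (n + 1) = true) ∧ ∀ m ≤ n, ¬(x m = true ∧ x (m + 1) = true)) ↔
      ¬(x 0 = true ∧ x 1 = true) ∧ ∃ n, x (n + 1) = true := by
  constructor
  · rintro ⟨n, ⟨-, hn⟩, hno⟩
    exact ⟨hno 0 n.zero_le, n, hn⟩
  · rintro ⟨h01, hex⟩
    classical
    have hmin : ∀ m < Nat.find hex, x (m + 1) = false := fun m hm => by
      simpa using Nat.find_min hex hm
    have hfalse : x (Nat.find hex) = false := by
      cases hn : Nat.find hex with
      | zero =>
        have h1 := Nat.find_spec hex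
        rw [hn] at h1
        simpa [h1] using h01
      | succ p => exact hmin p (by omega)
    refine ⟨Nat.find hex, ⟨hfalse, Nat.find_spec hex⟩, fun m hm hHH => ?_⟩
    rcases hm.lt_or_eq with hlt | rfl
    · simp [hmin m hlt] at hHH
    · simp [hfalse] at hHH

section

variable {Ω : Type*} [MeasurableSpace Ω] {μ : Measure Ω}

theorem ProbabilityTheory.iIndepFun.measure_forall_mem_eq_zero {β : Type*} [MeasurableSpace β]
    {X : ℕ → Ω → β} (hX : iIndepFun X μ) {s : ℕ → Set β} (hs : ∀ n, MeasurableSet (s n))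
    {p : ℝ≥0∞} (hp : p < 1) (h : ∀ n, μ (X n ⁻¹' s n) ≤ p) : μ {ω | ∀ n, X n ω ∈ s n} = 0 := by
  refine le_antisymm (ge_of_tendsto' (ENNReal.tendsto_pow_atTop_nhds_zero_of_lt_one hp)
    fun n => ?_) zero_le
  calc μ {ω | ∀ n, X n ω ∈ s n}
      ≤ μ (⋂ i ∈ Finset.range n, X i ⁻¹' s i) :=
        measure_mono fun ω hω => by simpa using fun i _ => hω i
    _ = ∏ i ∈ Finset.range n, μ (X i ⁻¹' s i) :=
        hX.measure_inter_preimage_eq_mul _ fun i _ => hs i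
    _ ≤ ∏ _i ∈ Finset.range n, p := Finset.prod_le_prod' fun i _ => h i
    _ = p ^ n := by simp

theorem measure_eq_false_eq_half [IsProbabilityMeasure μ] {Y : Ω → Bool} (hY : Measurable Y)
    (h : μ {ω | Y ω = true} = 1 / 2) : μ {ω | Y ω = false} = 1 / 2 := by
  have hcompl : {ω | Y ω = false} = {ω | Y ω = true}ᶜ := by ext; simp
  have hs : MeasurableSet {ω | Y ω = true} := hY (measurableSet_singleton true)
  rw [hcompl, prob_compl_eq_one_sub hs, h, one_div, ENNReal.one_sub_inv_two]

end

/-- Penney's game with a fair coin: in an infinite sequence of i.i.d. fair coin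
flips (`true` = H, `false` = T), the probability that the pattern TH appears
before the pattern HH is `3/4`.  "TH appears before HH" is expressed as: there is
an index `n` where TH occurs such that HH occurs at no index `m ≤ n`. -/
theorem stmt_13 {Ω : Type*} [MeasurableSpace Ω] (μ : Measure Ω) [IsProbabilityMeasure μ]
    (X : ℕ → Ω → Bool) (hmeas : ∀ n, Measurable (X n))
    (hindep : iIndepFun X μ)
    (hfair : ∀ n, μ {ω | X n ω = true} = 1/2) :
    μ {ω | ∃ n : ℕ, (X n ω = false ∧ X (n+1) ω = true) ∧
        ∀ m ≤ n, ¬ (X m ω = true ∧ X (m+1) ω = true)} = 3/4 := by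
  set HH : Set Ω := X 0 ⁻¹' {true} ∩ X 1 ⁻¹' {true}
  set allTails : Set Ω := {ω | ∀ n, X (n + 1) ω ∈ ({false} : Set Bool)}
  have hHH : μ HH = 1 / 4 := by
    rw [(hindep.indepFun zero_ne_one).measure_inter_preimage_eq_mul _ _
      (measurableSet_singleton _) (measurableSet_singleton _)]
    simp only [Set.preimage, Set.mem_singleton_iff, hfair]
    rw [one_div, one_div, ← ENNReal.mul_inv (by simp) (by simp)]
    norm_num
  have hHH_meas : MeasurableSet HH :=
    (hmeas 0 (measurableSet_singleton _)).inter (hmeas 1 (measurableSet_singleton _))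
  have hallTails : μ allTails = 0 :=
    (hindep.precomp (add_left_injective 1)).measure_forall_mem_eq_zero
      (fun _ => measurableSet_singleton false) (by norm_num) fun _ =>
      (measure_eq_false_eq_half (hmeas _) (hfair _)).le
  have hevent : {ω | ∃ n : ℕ, (X n ω = false ∧ X (n+1) ω = true) ∧
      ∀ m ≤ n, ¬ (X m ω = true ∧ X (m+1) ω = true)} = HHᶜ \ allTails := by
    ext ω
    rw [Set.mem_ofPred_eq, exists_TH_before_HH_iff fun k => X k ω]
    simp [HH, allTails]
  rw [hevent, measure_sdiff_null hallTails, prob_compl_eq_one_sub hHH_meas, hHH]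
  refine ENNReal.sub_eq_of_eq_add (by simp) ?_
  rw [ENNReal.div_add_div_same, eq_comm, ENNReal.div_eq_one_iff] <;> norm_num
end

section
/- There exist two measures of a binary classifier that cannot be simultaneously equalized across two groups except in degenerate cases: if a classifier achieves equal positive predictive value across two groups with different base rates, and has nonzero false positive and false negative rates, then it cannot also have equal false positive rates and equal false negative rates across the groups. -/
/-!
With the error rates shared, `a = 1 - FNR` and `f = FPR` fixed and both positive, cross-multiplying
`p₁ a / (p₁ a + (1 - p₁) f) = p₂ a / (p₂ a + (1 - p₂) f)` leaves `a f (p₁ - p₂) = 0`: the positive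
predictive value is an injective function of the base rate.
-/

open Set

noncomputable def ppv (p fpr fnr : ℝ) : ℝ :=
  p * (1 - fnr) / (p * (1 - fnr) + (1 - p) * fpr)

theorem ppv_denom_pos {p fpr fnr : ℝ} (hp : p ∈ Icc (0 : ℝ) 1) (hfpr : 0 < fpr) (hfnr : fnr < 1) :
    0 < p * (1 - fnr) + (1 - p) * fpr := by
  obtain ⟨hp₀, hp₁⟩ := hp
  have htpr : 0 < 1 - fnr := sub_pos.mpr hfnr
  rcases hp₀.eq_or_lt with rfl | hp₀
  · simpa using hfpr
  · exact add_pos_of_pos_of_nonneg (mul_pos hp₀ htpr) (mul_nonneg (sub_nonneg.mpr hp₁) hfpr.le)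

theorem ppv_injOn {fpr fnr : ℝ} (hfpr : 0 < fpr) (hfnr : fnr < 1) :
    InjOn (fun p ↦ ppv p fpr fnr) (Icc 0 1) := by
  intro p₁ hp₁ p₂ hp₂ h
  have hcross := (div_eq_div_iff (ppv_denom_pos hp₁ hfpr hfnr).ne'
    (ppv_denom_pos hp₂ hfpr hfnr).ne').mp h
  have hprod : ((1 - fnr) * fpr) * (p₁ - p₂) = 0 := by linear_combination hcross
  have htpr : 1 - fnr ≠ 0 := (sub_pos.mpr hfnr).ne'
  simpa [htpr, hfpr.ne', sub_eq_zero] using hprod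

theorem stmt_15_general (p₁ p₂ fpr₁ fpr₂ fnr₁ fnr₂ : ℝ)
    (hp₁ : p₁ ∈ Set.Ioo (0:ℝ) 1) (hp₂ : p₂ ∈ Set.Ioo (0:ℝ) 1) (hp : p₁ ≠ p₂)
    (hfpr₁ : fpr₁ ∈ Set.Ioo (0:ℝ) 1)
    (hfnr₁ : fnr₁ ∈ Set.Ioo (0:ℝ) 1)
    (hppv : p₁ * (1 - fnr₁) / (p₁ * (1 - fnr₁) + (1 - p₁) * fpr₁) =
            p₂ * (1 - fnr₂) / (p₂ * (1 - fnr₂) + (1 - p₂) * fpr₂)) :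
    ¬ (fpr₁ = fpr₂ ∧ fnr₁ = fnr₂) := by
  rintro ⟨rfl, rfl⟩
  exact hp (ppv_injOn hfpr₁.1 hfnr₁.2 (Ioo_subset_Icc_self hp₁) (Ioo_subset_Icc_self hp₂) hppv)

/-- Impossibility of simultaneously equalizing fairness measures: if a binary
classifier achieves equal positive predictive value
`PPV = p(1-FNR)/(p(1-FNR)+(1-p)FPR)` across two groups with different base rates
`p₁ ≠ p₂ ∈ (0,1)`, and has nonzero false positive and false negative rates
(all in `(0,1)`), then it cannot also have equal false positive rates and equal
false negative rates across the groups. -/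
theorem stmt_15 (p₁ p₂ fpr₁ fpr₂ fnr₁ fnr₂ : ℝ)
    (hp₁ : p₁ ∈ Set.Ioo (0:ℝ) 1) (hp₂ : p₂ ∈ Set.Ioo (0:ℝ) 1) (hp : p₁ ≠ p₂)
    (hfpr₁ : fpr₁ ∈ Set.Ioo (0:ℝ) 1) (hfpr₂ : fpr₂ ∈ Set.Ioo (0:ℝ) 1)
    (hfnr₁ : fnr₁ ∈ Set.Ioo (0:ℝ) 1) (hfnr₂ : fnr₂ ∈ Set.Ioo (0:ℝ) 1)
    (hppv : p₁ * (1 - fnr₁) / (p₁ * (1 - fnr₁) + (1 - p₁) * fpr₁) =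
            p₂ * (1 - fnr₂) / (p₂ * (1 - fnr₂) + (1 - p₂) * fpr₂)) :
    ¬ (fpr₁ = fpr₂ ∧ fnr₁ = fnr₂) :=
  stmt_15_general p₁ p₂ fpr₁ fpr₂ fnr₁ fnr₂ hp₁ hp₂ hp hfpr₁ hfnr₁ hppv
end

section
/- In a structure satisfying the paper's three Peano axioms, the iterates of 1 under σ exhaust N: the map n ↦ σⁿ(1) from ℕ (including 0, with σ⁰(1) = 1) to N is a bijection. -/
theorem Function.Injective.injective_iterate_apply {α : Type*} {f : α → α}
    (hf : Function.Injective f) {a : α} (ha : ∀ x, f x ≠ a) :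
    Function.Injective (fun n : ℕ => f^[n] a) := by
  intro m n h
  induction m generalizing n with
  | zero =>
    cases n with
    | zero => rfl
    | succ n => exact absurd h.symm (by simpa [Function.iterate_succ_apply'] using ha _)
  | succ m ih =>
    cases n with
    | zero => exact absurd h (by simpa [Function.iterate_succ_apply'] using ha _)
    | succ n =>
      simp only [Function.iterate_succ_apply'] at h
      exact congrArg Nat.succ (ih (hf h))

theorem range_iterate_apply_eq_univ {α : Type*} {f : α → α} {a : α}
    (hind : ∀ S : Set α, a ∈ S → (∀ x ∈ S, f x ∈ S) → S = Set.univ) :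
    Set.range (fun n : ℕ => f^[n] a) = Set.univ :=
  hind _ ⟨0, rfl⟩ <| by
    rintro _ ⟨n, rfl⟩
    exact ⟨n + 1, Function.iterate_succ_apply' f n a⟩

theorem stmt_18_general {N : Type*} (one : N) (σ : N → N)
    (hne : ∀ n, σ n ≠ one) (hinj : Function.Injective σ)
    (hind : ∀ S : Set N, one ∈ S → (∀ n ∈ S, σ n ∈ S) → S = Set.univ) :
    Function.Bijective (fun n : ℕ => σ^[n] one) :=
  ⟨hinj.injective_iterate_apply hne, Set.range_eq_univ.mp (range_iterate_apply_eq_univ hind)⟩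

/-- In a structure satisfying the paper's three Peano axioms, the iterates of `1`
under `σ` exhaust `N`: the map `n ↦ σⁿ(1)` (with `σ⁰(1) = 1`) is a bijection from
`ℕ` to `N`. -/
theorem stmt_18 {N : Type*} (one : N) (σ : N → N)
    (hne : ∀ n, σ n ≠ one) (hinj : Function.Injective σ)
    (hsurj : ∀ m : N, m ≠ one → ∃ n, σ n = m)
    (hind : ∀ S : Set N, one ∈ S → (∀ n ∈ S, σ n ∈ S) → S = Set.univ) :
    Function.Bijective (fun n : ℕ => σ^[n] one) :=
  stmt_18_general one σ hne hinj hind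
end
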